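/- Suppose ψ(x,t) = μ(t)^{−1/2}e^{S(x,t)}u(ξ,τ), φ(x,t) = μ(t)^{−1/2}e^{S(x,t)}v(ξ,τ), ϕ(x,t) = μ(t)^{−1/2}e^{S(x,t)}w(ξ,τ) with S = αx² + δx + κ, ξ = βx + ε, τ = γ, where α, β, γ, δ, ε, κ, μ satisfy the Riccati system and μ'/μ = −4aα − 2d, and (u,v,w) satisfies the three-component Lotka-Volterra system u_τ = u_{ξξ} + u(a₁ − b₁u − c₁v − e₁w), v_τ = v_{ξξ} + v(a₂ − b₂u − c₂v − e₂w), w_τ = w_{ξξ} + w(a₃ − b₃u − c₃v − e₃w). Then with L_i = a_i·aβ², h_i = −b_i·aβ²μ^{1/2}e^{−S}, r_i = −c_i·aβ²μ^{1/2}e^{−S}, s_i = −e_i·aβ²μ^{1/2}e^{−S} (i = 1,2,3), the triple (ψ, φ, ϕ) satisfies ψ_t = aψ_{xx} − (bx² − d − L₁ − xf)ψ − (g − cx)ψ_x + (h₁ψ + r₁φ + s₁ϕ)ψ, and the analogous equations for φ and ϕ with indices 2 and 3. -/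

import Mathlib

open Real Function

lemma hasDerivAt_comp2 {F : ℝ → ℝ → ℝ} (hF : ContDiff ℝ (⊤ : ℕ∞) (Function.uncurry F))
    {c₁ c₂ : ℝ → ℝ} {c₁' c₂' s : ℝ} (h₁ : HasDerivAt c₁ c₁' s) (h₂ : HasDerivAt c₂ c₂' s) :
    HasDerivAt (fun y => F (c₁ y) (c₂ y))
      (deriv (fun z => F z (c₂ s)) (c₁ s) * c₁' + deriv (F (c₁ s)) (c₂ s) * c₂') s := by
  set L := fderiv ℝ (Function.uncurry F) (c₁ s, c₂ s) with hLdef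
  have hL : HasFDerivAt (Function.uncurry F) L (c₁ s, c₂ s) :=
    ((hF.differentiable (by simp)) (c₁ s, c₂ s)).hasFDerivAt
  have h10 : HasDerivAt (fun z => F z (c₂ s)) (L (1, 0)) (c₁ s) := by
    have hc : HasDerivAt (fun z : ℝ => (z, c₂ s)) ((1 : ℝ), (0 : ℝ)) (c₁ s) :=
      (hasDerivAt_id _).prodMk (hasDerivAt_const _ _)
    exact hL.comp_hasDerivAt (c₁ s) hc
  have h01 : HasDerivAt (F (c₁ s)) (L (0, 1)) (c₂ s) := by
    have hc : HasDerivAt (fun z : ℝ => (c₁ s, z)) ((0 : ℝ), (1 : ℝ)) (c₂ s) :=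
      (hasDerivAt_const _ _).prodMk (hasDerivAt_id _)
    exact hL.comp_hasDerivAt (c₂ s) hc
  have hc : HasDerivAt (fun y => (c₁ y, c₂ y)) (c₁', c₂') s := h₁.prodMk h₂
  have hmain : HasDerivAt (fun y => F (c₁ y) (c₂ y)) (L (c₁', c₂')) s :=
    by have := hL.comp_hasDerivAt s hc; exact this
  rw [h10.deriv, h01.deriv]
  have : L (c₁', c₂') = L (1, 0) * c₁' + L (0, 1) * c₂' := by
    have : (c₁', c₂') = c₁' • ((1 : ℝ), (0 : ℝ)) + c₂' • ((0 : ℝ), (1 : ℝ)) := by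
      simp [Prod.ext_iff]
    rw [this, map_add, map_smul, map_smul, smul_eq_mul, smul_eq_mul]; ring
  rwa [this] at hmain

lemma contDiff_partialx {F : ℝ → ℝ → ℝ} (hF : ContDiff ℝ (⊤ : ℕ∞) (Function.uncurry F)) :
    ContDiff ℝ (⊤ : ℕ∞) (Function.uncurry (fun p q => deriv (fun z => F z q) p)) := by
  have heq : Function.uncurry (fun p q => deriv (fun z => F z q) p) =
      fun pq : ℝ × ℝ => (fderiv ℝ (Function.uncurry F) pq) (1, 0) := by
    funext pq
    obtain ⟨p, q⟩ := pq
    have hL : HasFDerivAt (Function.uncurry F) (fderiv ℝ (Function.uncurry F) (p, q)) (p, q) :=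
      ((hF.differentiable (by simp)) (p, q)).hasFDerivAt
    have hc : HasDerivAt (fun z : ℝ => (z, q)) ((1 : ℝ), (0 : ℝ)) p :=
      (hasDerivAt_id _).prodMk (hasDerivAt_const _ _)
    exact (hL.comp_hasDerivAt p hc).deriv
  rw [heq]
  exact (ContinuousLinearMap.apply ℝ ℝ ((1 : ℝ), (0 : ℝ))).contDiff.comp
    (hF.fderiv_right (by simp))

lemma key
    (a b c d f g α β γ δ ε κ μ : ℝ → ℝ)
    (A B C E : ℝ)
    (U P Q R : ℝ → ℝ → ℝ)
    (hμpos : ∀ t, 0 < μ t)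
    (hαs : ContDiff ℝ (⊤ : ℕ∞) α) (hβs : ContDiff ℝ (⊤ : ℕ∞) β) (hγs : ContDiff ℝ (⊤ : ℕ∞) γ)
    (hδs : ContDiff ℝ (⊤ : ℕ∞) δ) (hεs : ContDiff ℝ (⊤ : ℕ∞) ε) (hκs : ContDiff ℝ (⊤ : ℕ∞) κ)
    (hμs : ContDiff ℝ (⊤ : ℕ∞) μ) (hUs : ContDiff ℝ (⊤ : ℕ∞) (Function.uncurry U))
    (hα : ∀ t, deriv α t + b t = 2 * c t * α t + 4 * a t * (α t) ^ 2)
    (hβ : ∀ t, deriv β t = (c t + 4 * a t * α t) * β t)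
    (hγ : ∀ t, deriv γ t = a t * (β t) ^ 2)
    (hδ : ∀ t, deriv δ t + 2 * α t * g t = (c t + 4 * a t * α t) * δ t + f t)
    (hε : ∀ t, deriv ε t = (2 * a t * δ t - g t) * β t)
    (hκ : ∀ t, deriv κ t = a t * (δ t) ^ 2 - g t * δ t)
    (hμ : ∀ t, deriv μ t / μ t = -(4 * a t * α t) - 2 * d t)
    (hU : ∀ p q : ℝ, deriv (U p) q =
      deriv (fun y => deriv (fun z => U z q) y) p +
        U p q * (A - B * P p q - C * Q p q - E * R p q))
    (x t : ℝ) :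
    deriv (fun s => μ s ^ (-(1 : ℝ) / 2) *
        Real.exp (α s * x ^ 2 + δ s * x + κ s) * U (β s * x + ε s) (γ s)) t =
      a t * deriv (fun y => deriv (fun z => μ t ^ (-(1 : ℝ) / 2) *
            Real.exp (α t * z ^ 2 + δ t * z + κ t) * U (β t * z + ε t) (γ t)) y) x
        - (b t * x ^ 2 - d t - A * a t * (β t) ^ 2 - x * f t) *
            (μ t ^ (-(1 : ℝ) / 2) * Real.exp (α t * x ^ 2 + δ t * x + κ t) *
              U (β t * x + ε t) (γ t))
        - (g t - c t * x) * deriv (fun y => μ t ^ (-(1 : ℝ) / 2) *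
            Real.exp (α t * y ^ 2 + δ t * y + κ t) * U (β t * y + ε t) (γ t)) x
        + ((-B * a t * (β t) ^ 2 * μ t ^ ((1 : ℝ) / 2) *
              Real.exp (-(α t * x ^ 2 + δ t * x + κ t))) *
            (μ t ^ (-(1 : ℝ) / 2) * Real.exp (α t * x ^ 2 + δ t * x + κ t) *
              P (β t * x + ε t) (γ t)) +
           (-C * a t * (β t) ^ 2 * μ t ^ ((1 : ℝ) / 2) *
              Real.exp (-(α t * x ^ 2 + δ t * x + κ t))) *
            (μ t ^ (-(1 : ℝ) / 2) * Real.exp (α t * x ^ 2 + δ t * x + κ t) *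
              Q (β t * x + ε t) (γ t)) +
           (-E * a t * (β t) ^ 2 * μ t ^ ((1 : ℝ) / 2) *
              Real.exp (-(α t * x ^ 2 + δ t * x + κ t))) *
            (μ t ^ (-(1 : ℝ) / 2) * Real.exp (α t * x ^ 2 + δ t * x + κ t) *
              R (β t * x + ε t) (γ t))) *
          (μ t ^ (-(1 : ℝ) / 2) * Real.exp (α t * x ^ 2 + δ t * x + κ t) *
            U (β t * x + ε t) (γ t)) := by
  have hμne : μ t ≠ 0 := (hμpos t).ne'
  -- derivatives of the coefficient functions
  have hαd : HasDerivAt α (deriv α t) t := (hαs.differentiable (by simp) t).hasDerivAt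
  have hβd : HasDerivAt β (deriv β t) t := (hβs.differentiable (by simp) t).hasDerivAt
  have hγd : HasDerivAt γ (deriv γ t) t := (hγs.differentiable (by simp) t).hasDerivAt
  have hδd : HasDerivAt δ (deriv δ t) t := (hδs.differentiable (by simp) t).hasDerivAt
  have hεd : HasDerivAt ε (deriv ε t) t := (hεs.differentiable (by simp) t).hasDerivAt
  have hκd : HasDerivAt κ (deriv κ t) t := (hκs.differentiable (by simp) t).hasDerivAt
  have hμd : HasDerivAt μ (deriv μ t) t := (hμs.differentiable (by simp) t).hasDerivAt
  set ξ : ℝ := β t * x + ε t with hξdef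
  set τ0 : ℝ := γ t with hτdef
  -- time derivative
  have hM : HasDerivAt (fun s => μ s ^ (-(1 : ℝ) / 2))
      (deriv μ t * (-(1 : ℝ) / 2) * μ t ^ (-(1 : ℝ) / 2 - 1)) t :=
    hμd.rpow_const (Or.inl hμne)
  have hexpT : HasDerivAt (fun s => Real.exp (α s * x ^ 2 + δ s * x + κ s))
      (Real.exp (α t * x ^ 2 + δ t * x + κ t) *
        (deriv α t * x ^ 2 + deriv δ t * x + deriv κ t)) t := by
    have h1 : HasDerivAt (fun s => α s * x ^ 2 + δ s * x + κ s)
        (deriv α t * x ^ 2 + deriv δ t * x + deriv κ t) t :=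
      ((hαd.mul_const (x ^ 2)).add (hδd.mul_const x)).add hκd
    simpa [mul_comm] using h1.exp
  have hUT : HasDerivAt (fun s => U (β s * x + ε s) (γ s))
      (deriv (fun z => U z τ0) ξ * (deriv β t * x + deriv ε t) +
        deriv (U ξ) τ0 * deriv γ t) t :=
    hasDerivAt_comp2 hUs ((hβd.mul_const x).add hεd) hγd
  have hT0 : HasDerivAt (fun s => μ s ^ (-(1 : ℝ) / 2) *
      Real.exp (α s * x ^ 2 + δ s * x + κ s) * U (β s * x + ε s) (γ s))
      ((deriv μ t * (-(1 : ℝ) / 2) * μ t ^ (-(1 : ℝ) / 2 - 1) * Real.exp (α t * x ^ 2 + δ t * x + κ t) +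
          μ t ^ (-(1 : ℝ) / 2) * (Real.exp (α t * x ^ 2 + δ t * x + κ t) *
            (deriv α t * x ^ 2 + deriv δ t * x + deriv κ t))) * U (β t * x + ε t) (γ t) +
        μ t ^ (-(1 : ℝ) / 2) * Real.exp (α t * x ^ 2 + δ t * x + κ t) *
          (deriv (fun z => U z τ0) ξ * (deriv β t * x + deriv ε t) + deriv (U ξ) τ0 * deriv γ t)) t := (hM.mul hexpT).mul hUT
  have hT := hT0.deriv
  rw [hT]
  -- first spatial derivative, as a function of the base point
  have hx : ∀ y : ℝ, HasDerivAt (fun z => μ t ^ (-(1 : ℝ) / 2) *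
      Real.exp (α t * z ^ 2 + δ t * z + κ t) * U (β t * z + ε t) (γ t))
      (μ t ^ (-(1 : ℝ) / 2) * Real.exp (α t * y ^ 2 + δ t * y + κ t) *
        ((2 * α t * y + δ t) * U (β t * y + ε t) τ0 +
          deriv (fun z => U z τ0) (β t * y + ε t) * β t)) y := by
    intro y
    have hpoly : HasDerivAt (fun z : ℝ => α t * z ^ 2 + δ t * z + κ t)
        (2 * α t * y + δ t) y := by
      have := (((hasDerivAt_pow 2 y).const_mul (α t)).add
        ((hasDerivAt_id y).const_mul (δ t))).add_const (κ t)
      exact this.congr_deriv (by ring)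
    have hexpz : HasDerivAt (fun z => Real.exp (α t * z ^ 2 + δ t * z + κ t))
        (Real.exp (α t * y ^ 2 + δ t * y + κ t) * (2 * α t * y + δ t)) y := by
      simpa [mul_comm] using hpoly.exp
    have hη : HasDerivAt (fun z : ℝ => β t * z + ε t) (β t) y := by
      simpa using ((hasDerivAt_id y).const_mul (β t)).add_const (ε t)
    have hUz : HasDerivAt (fun z => U (β t * z + ε t) (γ t))
        (deriv (fun z => U z τ0) (β t * y + ε t) * β t +
          deriv (U (β t * y + ε t)) τ0 * 0) y :=
      hasDerivAt_comp2 hUs hη (hasDerivAt_const y (γ t))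
    have h := ((hasDerivAt_const y (μ t ^ (-(1 : ℝ) / 2))).mul hexpz).mul hUz
    exact h.congr_deriv (by simp only [Pi.mul_apply, hξdef, hτdef]; ring)
  have hd1 : deriv (fun z => μ t ^ (-(1 : ℝ) / 2) *
      Real.exp (α t * z ^ 2 + δ t * z + κ t) * U (β t * z + ε t) (γ t)) =
      fun y => μ t ^ (-(1 : ℝ) / 2) * Real.exp (α t * y ^ 2 + δ t * y + κ t) *
        ((2 * α t * y + δ t) * U (β t * y + ε t) τ0 +
          deriv (fun z => U z τ0) (β t * y + ε t) * β t) :=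
    funext fun y => (hx y).deriv
  rw [hd1]
  beta_reduce
  -- second spatial derivative
  have hxx : HasDerivAt (fun y => μ t ^ (-(1 : ℝ) / 2) *
      Real.exp (α t * y ^ 2 + δ t * y + κ t) *
        ((2 * α t * y + δ t) * U (β t * y + ε t) τ0 +
          deriv (fun z => U z τ0) (β t * y + ε t) * β t))
      (μ t ^ (-(1 : ℝ) / 2) * Real.exp (α t * x ^ 2 + δ t * x + κ t) *
        ((2 * α t * x + δ t) *
          ((2 * α t * x + δ t) * U ξ τ0 + deriv (fun z => U z τ0) ξ * β t) +
         (2 * α t * U ξ τ0 + (2 * α t * x + δ t) * (deriv (fun z => U z τ0) ξ * β t) +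
          deriv (fun y => deriv (fun z => U z τ0) y) ξ * β t * β t))) x := by
    have hpoly : HasDerivAt (fun z : ℝ => α t * z ^ 2 + δ t * z + κ t)
        (2 * α t * x + δ t) x := by
      have := (((hasDerivAt_pow 2 x).const_mul (α t)).add
        ((hasDerivAt_id x).const_mul (δ t))).add_const (κ t)
      exact this.congr_deriv (by ring)
    have hexpz : HasDerivAt (fun z => Real.exp (α t * z ^ 2 + δ t * z + κ t))
        (Real.exp (α t * x ^ 2 + δ t * x + κ t) * (2 * α t * x + δ t)) x := by
      simpa [mul_comm] using hpoly.exp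
    have hη : HasDerivAt (fun z : ℝ => β t * z + ε t) (β t) x := by
      simpa using ((hasDerivAt_id x).const_mul (β t)).add_const (ε t)
    have hUz : HasDerivAt (fun z => U (β t * z + ε t) τ0)
        (deriv (fun z => U z τ0) ξ * β t + deriv (U ξ) τ0 * 0) x :=
      hasDerivAt_comp2 hUs hη (hasDerivAt_const x τ0)
    have hUxz : HasDerivAt
        (fun z => deriv (fun z' => U z' τ0) (β t * z + ε t))
        (deriv (fun y => deriv (fun z' => U z' τ0) y) ξ * β t +
          deriv (fun q => deriv (fun z' => U z' q) ξ) τ0 * 0) x :=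
      hasDerivAt_comp2 (contDiff_partialx hUs) hη (hasDerivAt_const x τ0)
    have hlin : HasDerivAt (fun y : ℝ => 2 * α t * y + δ t) (2 * α t) x := by
      simpa using ((hasDerivAt_id x).const_mul (2 * α t)).add_const (δ t)
    have hbr : HasDerivAt (fun y => (2 * α t * y + δ t) * U (β t * y + ε t) τ0 +
        deriv (fun z => U z τ0) (β t * y + ε t) * β t)
        ((2 * α t) * U ξ τ0 +
          (2 * α t * x + δ t) * (deriv (fun z => U z τ0) ξ * β t + deriv (U ξ) τ0 * 0) +
          (deriv (fun y => deriv (fun z' => U z' τ0) y) ξ * β t +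
            deriv (fun q => deriv (fun z' => U z' q) ξ) τ0 * 0) * β t) x :=
      (hlin.mul hUz).add (hUxz.mul_const (β t))
    have h := ((hasDerivAt_const x (μ t ^ (-(1 : ℝ) / 2))).mul hexpz).mul hbr
    exact h.congr_deriv (by simp only [Pi.mul_apply, hξdef, hτdef]; ring)
  rw [hxx.deriv]
  -- now a pure algebraic identity
  have hαt : deriv α t = 2 * c t * α t + 4 * a t * (α t) ^ 2 - b t := by
    have := hα t; linarith
  have hδt : deriv δ t = (c t + 4 * a t * α t) * δ t + f t - 2 * α t * g t := by
    have := hδ t; linarith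
  have hμt : deriv μ t = (-(4 * a t * α t) - 2 * d t) * μ t := by
    have := hμ t; field_simp at this; linarith [this]
  rw [hαt, hβ t, hγ t, hδt, hε t, hκ t, hμt, hU ξ τ0]
  have hrpow1 : μ t ^ (-(1 : ℝ) / 2 - 1) = μ t ^ (-(1 : ℝ) / 2) / μ t := by
    rw [Real.rpow_sub (hμpos t), Real.rpow_one]
  have hrpow2 : μ t ^ ((1 : ℝ) / 2) = (μ t ^ (-(1 : ℝ) / 2))⁻¹ := by
    rw [← Real.rpow_neg (hμpos t).le]; norm_num
  have hMne : μ t ^ (-(1 : ℝ) / 2) ≠ 0 :=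
    (Real.rpow_pos_of_pos (hμpos t) _).ne'
  rw [hrpow1, hrpow2, Real.exp_neg]
  simp only [hξdef, hτdef]
  have hEne : Real.exp (α t * x ^ 2 + δ t * x + κ t) ≠ 0 := Real.exp_ne_zero _
  field_simp
  ring




theorem stmt19
    (a b c d f g α β γ δ ε κ μ : ℝ → ℝ)
    (a₁ a₂ a₃ b₁ b₂ b₃ c₁ c₂ c₃ e₁ e₂ e₃ : ℝ)
    (u v w ψ φ χ : ℝ → ℝ → ℝ)
    (hμpos : ∀ t, 0 < μ t)
    (hsmooth : ContDiff ℝ (⊤ : ℕ∞) α ∧ ContDiff ℝ (⊤ : ℕ∞) β ∧ ContDiff ℝ (⊤ : ℕ∞) γ ∧ ContDiff ℝ (⊤ : ℕ∞) δ ∧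
      ContDiff ℝ (⊤ : ℕ∞) ε ∧ ContDiff ℝ (⊤ : ℕ∞) κ ∧ ContDiff ℝ (⊤ : ℕ∞) μ ∧
      ContDiff ℝ (⊤ : ℕ∞) (Function.uncurry u) ∧ ContDiff ℝ (⊤ : ℕ∞) (Function.uncurry v) ∧
      ContDiff ℝ (⊤ : ℕ∞) (Function.uncurry w))
    (hα : ∀ t, deriv α t + b t = 2 * c t * α t + 4 * a t * (α t) ^ 2)
    (hβ : ∀ t, deriv β t = (c t + 4 * a t * α t) * β t)
    (hγ : ∀ t, deriv γ t = a t * (β t) ^ 2)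
    (hδ : ∀ t, deriv δ t + 2 * α t * g t = (c t + 4 * a t * α t) * δ t + f t)
    (hε : ∀ t, deriv ε t = (2 * a t * δ t - g t) * β t)
    (hκ : ∀ t, deriv κ t = a t * (δ t) ^ 2 - g t * δ t)
    (hμ : ∀ t, deriv μ t / μ t = -(4 * a t * α t) - 2 * d t)
    (hu : ∀ ξ τ : ℝ, deriv (u ξ) τ =
      deriv (fun y => deriv (fun z => u z τ) y) ξ +
        u ξ τ * (a₁ - b₁ * u ξ τ - c₁ * v ξ τ - e₁ * w ξ τ))
    (hv : ∀ ξ τ : ℝ, deriv (v ξ) τ =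
      deriv (fun y => deriv (fun z => v z τ) y) ξ +
        v ξ τ * (a₂ - b₂ * u ξ τ - c₂ * v ξ τ - e₂ * w ξ τ))
    (hw : ∀ ξ τ : ℝ, deriv (w ξ) τ =
      deriv (fun y => deriv (fun z => w z τ) y) ξ +
        w ξ τ * (a₃ - b₃ * u ξ τ - c₃ * v ξ τ - e₃ * w ξ τ))
    (hψ : ψ = fun x t => (μ t) ^ (-(1 : ℝ) / 2) *
      Real.exp (α t * x ^ 2 + δ t * x + κ t) * u (β t * x + ε t) (γ t))
    (hφ : φ = fun x t => (μ t) ^ (-(1 : ℝ) / 2) *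
      Real.exp (α t * x ^ 2 + δ t * x + κ t) * v (β t * x + ε t) (γ t))
    (hχ : χ = fun x t => (μ t) ^ (-(1 : ℝ) / 2) *
      Real.exp (α t * x ^ 2 + δ t * x + κ t) * w (β t * x + ε t) (γ t)) :
    (∀ x t : ℝ, deriv (ψ x) t =
      a t * deriv (fun y => deriv (fun z => ψ z t) y) x
        - (b t * x ^ 2 - d t - a₁ * a t * (β t) ^ 2 - x * f t) * ψ x t
        - (g t - c t * x) * deriv (fun y => ψ y t) x
        + ((-b₁ * a t * (β t) ^ 2 * (μ t) ^ ((1 : ℝ) / 2) *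
              Real.exp (-(α t * x ^ 2 + δ t * x + κ t))) * ψ x t +
           (-c₁ * a t * (β t) ^ 2 * (μ t) ^ ((1 : ℝ) / 2) *
              Real.exp (-(α t * x ^ 2 + δ t * x + κ t))) * φ x t +
           (-e₁ * a t * (β t) ^ 2 * (μ t) ^ ((1 : ℝ) / 2) *
              Real.exp (-(α t * x ^ 2 + δ t * x + κ t))) * χ x t) * ψ x t) ∧
    (∀ x t : ℝ, deriv (φ x) t =
      a t * deriv (fun y => deriv (fun z => φ z t) y) x
        - (b t * x ^ 2 - d t - a₂ * a t * (β t) ^ 2 - x * f t) * φ x t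
        - (g t - c t * x) * deriv (fun y => φ y t) x
        + ((-b₂ * a t * (β t) ^ 2 * (μ t) ^ ((1 : ℝ) / 2) *
              Real.exp (-(α t * x ^ 2 + δ t * x + κ t))) * ψ x t +
           (-c₂ * a t * (β t) ^ 2 * (μ t) ^ ((1 : ℝ) / 2) *
              Real.exp (-(α t * x ^ 2 + δ t * x + κ t))) * φ x t +
           (-e₂ * a t * (β t) ^ 2 * (μ t) ^ ((1 : ℝ) / 2) *
              Real.exp (-(α t * x ^ 2 + δ t * x + κ t))) * χ x t) * φ x t) ∧
    (∀ x t : ℝ, deriv (χ x) t =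
      a t * deriv (fun y => deriv (fun z => χ z t) y) x
        - (b t * x ^ 2 - d t - a₃ * a t * (β t) ^ 2 - x * f t) * χ x t
        - (g t - c t * x) * deriv (fun y => χ y t) x
        + ((-b₃ * a t * (β t) ^ 2 * (μ t) ^ ((1 : ℝ) / 2) *
              Real.exp (-(α t * x ^ 2 + δ t * x + κ t))) * ψ x t +
           (-c₃ * a t * (β t) ^ 2 * (μ t) ^ ((1 : ℝ) / 2) *
              Real.exp (-(α t * x ^ 2 + δ t * x + κ t))) * φ x t +
           (-e₃ * a t * (β t) ^ 2 * (μ t) ^ ((1 : ℝ) / 2) *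
              Real.exp (-(α t * x ^ 2 + δ t * x + κ t))) * χ x t) * χ x t) := by
  
  obtain ⟨hαs, hβs, hγs, hδs, hεs, hκs, hμs, hus, hvs, hws⟩ := hsmooth
  subst hψ; subst hφ; subst hχ
  refine ⟨fun x t => key a b c d f g α β γ δ ε κ μ a₁ b₁ c₁ e₁ u u v w hμpos
      hαs hβs hγs hδs hεs hκs hμs hus hα hβ hγ hδ hε hκ hμ hu x t,
    fun x t => key a b c d f g α β γ δ ε κ μ a₂ b₂ c₂ e₂ v u v w hμpos
      hαs hβs hγs hδs hεs hκs hμs hvs hα hβ hγ hδ hε hκ hμ hv x t,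
    fun x t => key a b c d f g α β γ δ ε κ μ a₃ b₃ c₃ e₃ w u v w hμpos
      hαs hβs hγs hδs hεs hκs hμs hws hα hβ hγ hδ hε hκ hμ hw x t⟩
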